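/- Let c = (c_0, ..., c_{2k}) be real with the Hankel matrix H_k(c) = (c_{i+j})_{0≤i,j≤k} positive semidefinite, the shifted Hankel matrix B_{k-1}(c) = (c_{i+j+1})_{0≤i,j≤k-1} positive semidefinite, and (c_{k+1}, ..., c_{2k}) in the range of B_{k-1}(c). Then there exists a finite positive Borel measure on [0,∞) with moments c_0, ..., c_{2k}, and conversely. -/

import Mathlib

/-!
Write `H = H_k(c)`, `B = B_{k-1}(c)` and `v = (c_{k+1}, …, c_{2k})`.

Sufficiency. Let `B u = v`. With `A = [1 | u]`, the matrix `B̂ = Aᵀ B A` is the shifted Hankel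
matrix of `c` extended by `c_{2k+1} := uᵀ v`; it is positive semidefinite, and `ker H ⊆ ker B̂`
because `B A` consists of the last `k` rows of `H`. Factor `H = Nᵀ N`; the kernel inclusion
yields a positive semidefinite `T` with `T N x = N y` whenever `B̂ x = H y`. As column `i` of `B̂`
is column `i + 1` of `H`, the columns `g_i` of `N` satisfy `T g_i = g_{i+1}` and
`g_i ⬝ g_j = c_{i+j}`, so `c_j = g_0 ⬝ T^j g_0` for `j ≤ 2k`: these are the moments of the
spectral measure of `T` at `g_0`, whose atoms are the (nonnegative) eigenvalues of `T`.

Necessity. With `q_x(t) = ∑ x_i t^i` we have `xᵀ H x = ∫ q_x²` and `xᵀ B x = ∫ t q_x²`. If `B w = 0`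
then `t q_w(t)² = 0` almost everywhere, hence `t^{k+1} q_w(t) = 0` almost everywhere and
`v ⬝ w = ∫ t^{k+1} q_w = 0`; since `B` is symmetric, `v ⊥ ker B` puts `v` in the range of `B`.
-/

open Matrix MeasureTheory

def hankel (c : ℕ → ℝ) (n : ℕ) : Matrix (Fin n) (Fin n) ℝ := of fun i j => c (i + j)

lemma hankel_isHermitian (c : ℕ → ℝ) (n : ℕ) : (hankel c n).IsHermitian := by
  ext i j
  simp [hankel, add_comm]

def HasMomentsUpTo (μ : Measure ℝ) (c : ℕ → ℝ) (m : ℕ) : Prop :=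
  ∀ j ≤ m, Integrable (fun A : ℝ => A ^ j) μ ∧ ∫ A, A ^ j ∂μ = c j

section LinearAlgebra

variable {ι : Type*} [Fintype ι] [DecidableEq ι]

lemma Matrix.IsHermitian.exists_mulVec_eq {B : Matrix ι ι ℝ} (hB : B.IsHermitian) {v : ι → ℝ}
    (hv : ∀ w, B *ᵥ w = 0 → v ⬝ᵥ w = 0) : ∃ u, B *ᵥ u = v := by
  have hmem : WithLp.toLp 2 v ∈ (toEuclideanLin B).kerᗮ := by
    intro w hw
    have hBw : B *ᵥ w = 0 := by simpa using congrArg WithLp.ofLp (LinearMap.mem_ker.mp hw)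
    simpa [PiLp.inner_apply, dotProduct, mul_comm] using hv w hBw
  rw [LinearMap.orthogonal_ker, ← toEuclideanLin_conjTranspose_eq_adjoint, hB.eq] at hmem
  obtain ⟨u, hu⟩ := hmem
  exact ⟨u, by simpa using congrArg WithLp.ofLp hu⟩

lemma Matrix.IsHermitian.pow_eq_conj_diagonal {A : Matrix ι ι ℝ} (hA : A.IsHermitian) (j : ℕ) :
    A ^ j = (hA.eigenvectorUnitary : Matrix ι ι ℝ) * diagonal (hA.eigenvalues ^ j) *
      (hA.eigenvectorUnitary : Matrix ι ι ℝ)ᵀ := by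
  rw [← cfc_pow_id (R := ℝ) A j hA.isSelfAdjoint, hA.cfc_eq, IsHermitian.cfc,
    Unitary.conjStarAlgAut_apply, star_eq_conjTranspose, conjTranspose_eq_transpose_of_trivial]
  rfl

lemma Matrix.PosSemidef.exists_dotProduct_pow_mulVec_eq_sum {T : Matrix ι ι ℝ}
    (hT : T.PosSemidef) (g : ι → ℝ) :
    ∃ w : ι → ℝ, (∀ i, 0 ≤ w i) ∧
      ∀ j : ℕ, g ⬝ᵥ (T ^ j *ᵥ g) = ∑ i, w i * hT.1.eigenvalues i ^ j := by
  set U : Matrix ι ι ℝ := ↑hT.1.eigenvectorUnitary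
  refine ⟨fun i => (g ᵥ* U) i ^ 2, fun i => sq_nonneg _, fun j => ?_⟩
  rw [hT.1.pow_eq_conj_diagonal, ← mulVec_mulVec, ← mulVec_mulVec, dotProduct_mulVec,
    ← vecMul_transpose Uᵀ, transpose_transpose, dotProduct]
  simp only [mulVec_diagonal, Pi.pow_apply]
  exact Finset.sum_congr rfl fun i _ => by ring

/-- With `H = P D Pᵀ`, take `N = D^{1/2} Pᵀ` and `T = E Pᵀ B P E`, `E = D^{-1/2}`. As `(√0)⁻¹ = 0`,
`E D^{1/2}` is the projection onto the eigenvectors of nonzero eigenvalue, and by the kernel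
inclusion `B P` kills the other ones. -/
lemma Matrix.PosSemidef.exists_factor_intertwining {H B : Matrix ι ι ℝ} (hH : H.PosSemidef)
    (hB : B.PosSemidef) (hker : ∀ x, H *ᵥ x = 0 → B *ᵥ x = 0) :
    ∃ N T : Matrix ι ι ℝ, T.PosSemidef ∧ Nᵀ * N = H ∧
      ∀ x y, B *ᵥ x = H *ᵥ y → T *ᵥ (N *ᵥ x) = N *ᵥ y := by
  set P : Matrix ι ι ℝ := ↑hH.1.eigenvectorUnitary
  set d := hH.1.eigenvalues
  have hPP : Pᵀ * P = 1 := by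
    rw [← conjTranspose_eq_transpose_of_trivial, ← star_eq_conjTranspose]
    exact Unitary.coe_star_mul_self _
  have hPP' : P * Pᵀ = 1 := by
    rw [← conjTranspose_eq_transpose_of_trivial, ← star_eq_conjTranspose]
    exact Unitary.coe_mul_star_self _
  have hHP : H = P * diagonal d * Pᵀ := by simpa using hH.1.pow_eq_conj_diagonal 1
  have hHP' : H * P = P * diagonal d := by
    rw [hHP]
    simp only [Matrix.mul_assoc, hPP, Matrix.mul_one]
  have hPH : Pᵀ * H = diagonal d * Pᵀ := by
    rw [hHP]
    simp only [← Matrix.mul_assoc, hPP, Matrix.one_mul]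
  set s : ι → ℝ := fun i => √(d i)
  set e : ι → ℝ := fun i => (√(d i))⁻¹
  have hes : B * P * (diagonal e * diagonal s) = B * P := by
    ext j i
    rw [diagonal_mul_diagonal, mul_diagonal]
    by_cases hd : d i = 0
    · have hHi : H *ᵥ (P *ᵥ Pi.single i 1) = 0 := by
        rw [mulVec_mulVec, hHP', ← mulVec_mulVec, diagonal_mulVec_single, hd, zero_mul,
          Pi.single_zero, mulVec_zero]
      have hBPi : (B * P) j i = 0 := by
        have := congrFun (hker _ hHi) j
        rwa [mulVec_mulVec, mulVec_single_one, col_apply] at this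
      simp [hBPi]
    · have : √(d i) ≠ 0 := Real.sqrt_ne_zero'.mpr ((hH.eigenvalues_nonneg i).lt_of_ne' hd)
      simp [e, s, this]
  have hed : diagonal e * diagonal d = diagonal s := by
    rw [diagonal_mul_diagonal]
    congr 1
    ext i
    exact (inv_mul_eq_div _ _).trans Real.div_sqrt
  refine ⟨diagonal s * Pᵀ, diagonal e * (Pᵀ * B * P) * diagonal e, ?_, ?_, ?_⟩
  · simpa [conjTranspose_eq_transpose_of_trivial] using
      (hB.conjTranspose_mul_mul_same P).conjTranspose_mul_mul_same (diagonal e)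
  · have hss : diagonal s * diagonal s = diagonal d := by
      rw [diagonal_mul_diagonal]
      congr 1
      ext i
      exact Real.mul_self_sqrt (hH.eigenvalues_nonneg i)
    rw [hHP, transpose_mul, transpose_transpose, diagonal_transpose, ← hss]
    simp only [Matrix.mul_assoc]
  · intro x y hxy
    have hTN : diagonal e * (Pᵀ * B * P) * diagonal e * (diagonal s * Pᵀ) =
        diagonal e * Pᵀ * B := by
      calc _ = diagonal e * Pᵀ * (B * P * (diagonal e * diagonal s)) * Pᵀ := by
            simp only [Matrix.mul_assoc]
        _ = diagonal e * Pᵀ * B * (P * Pᵀ) := by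
            rw [hes]
            simp only [Matrix.mul_assoc]
        _ = _ := by rw [hPP', Matrix.mul_one]
    have hEH : diagonal e * Pᵀ * H = diagonal s * Pᵀ := by
      rw [Matrix.mul_assoc, hPH, ← Matrix.mul_assoc, hed]
    rw [mulVec_mulVec, hTN, ← mulVec_mulVec, hxy, mulVec_mulVec, hEH]

variable {R : Type*} [CommSemiring R]

lemma pow_mulVec_eq_of_mulVec_castSucc {k : ℕ} {T : Matrix ι ι R} {g : Fin (k + 1) → ι → R}
    (hT : ∀ i : Fin k, T *ᵥ g i.castSucc = g i.succ) (i : Fin (k + 1)) :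
    T ^ (i : ℕ) *ᵥ g 0 = g i := by
  induction i using Fin.induction with
  | zero => simp
  | succ i ih =>
    rw [Fin.val_castSucc] at ih
    rw [Fin.val_succ, pow_succ', ← mulVec_mulVec, ih, hT]

lemma dotProduct_pow_add_mulVec {T : Matrix ι ι R} (hT : Tᵀ = T) (g : ι → R) (a b : ℕ) :
    g ⬝ᵥ (T ^ (a + b) *ᵥ g) = (T ^ a *ᵥ g) ⬝ᵥ (T ^ b *ᵥ g) := by
  have hsymm : g ᵥ* T ^ a = T ^ a *ᵥ g := by rw [← vecMul_transpose, transpose_pow, hT]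
  rw [pow_add, ← mulVec_mulVec, dotProduct_mulVec, hsymm]

lemma mulVec_single_dotProduct_mulVec_single (N : Matrix ι ι R) (i j : ι) :
    (N *ᵥ Pi.single i 1) ⬝ᵥ (N *ᵥ Pi.single j 1) = (Nᵀ * N) i j := by
  simp [mul_apply, dotProduct]

end LinearAlgebra

lemma exists_measure_Ici_moments_eq_sum {ι : Type*} [Fintype ι] {x w : ι → ℝ}
    (hx : ∀ i, 0 ≤ x i) (hw : ∀ i, 0 ≤ w i) :
    ∃ μ : Measure ℝ, IsFiniteMeasure μ ∧ μ (Set.Iio 0) = 0 ∧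
      ∀ j : ℕ, Integrable (fun A : ℝ => A ^ j) μ ∧ ∫ A, A ^ j ∂μ = ∑ i, w i * x i ^ j := by
  refine ⟨∑ i, ENNReal.ofReal (w i) • Measure.dirac (x i), ⟨by simp⟩, ?_, fun j => ?_⟩
  · simp [Measure.dirac_apply' _ measurableSet_Iio, not_lt.mpr (hx _)]
  have hint : ∀ i, Integrable (fun A : ℝ => A ^ j) (ENNReal.ofReal (w i) • Measure.dirac (x i)) :=
    fun i => (integrable_dirac enorm_lt_top).smul_measure ENNReal.ofReal_ne_top
  refine ⟨integrable_finsetSum_measure.mpr fun i _ => hint i, ?_⟩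
  rw [integral_finsetSum_measure fun i _ => hint i]
  simp [integral_smul_measure, ENNReal.toReal_ofReal (hw _)]

lemma Matrix.PosSemidef.exists_measure_Ici_moments {ι : Type*} [Fintype ι] [DecidableEq ι]
    {T : Matrix ι ι ℝ} (hT : T.PosSemidef) (g : ι → ℝ) :
    ∃ μ : Measure ℝ, IsFiniteMeasure μ ∧ μ (Set.Iio 0) = 0 ∧
      ∀ j : ℕ, Integrable (fun A : ℝ => A ^ j) μ ∧ ∫ A, A ^ j ∂μ = g ⬝ᵥ (T ^ j *ᵥ g) := by
  obtain ⟨w, hw, hgw⟩ := hT.exists_dotProduct_pow_mulVec_eq_sum g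
  simp_rw [hgw]
  exact exists_measure_Ici_moments_eq_sum hT.eigenvalues_nonneg hw

def oneSnocCol {k : ℕ} (u : Fin k → ℝ) : Matrix (Fin k) (Fin (k + 1)) ℝ :=
  of fun p => Fin.snoc ((1 : Matrix (Fin k) (Fin k) ℝ) p) (u p)

section Sufficiency

variable {k : ℕ} {c : ℕ → ℝ} {u : Fin k → ℝ}

lemma hankel_mul_oneSnocCol
    (hu : hankel (fun j => c (j + 1)) k *ᵥ u = fun i : Fin k => c (k + 1 + i)) :
    hankel (fun j => c (j + 1)) k * oneSnocCol u = (hankel c (k + 1)).submatrix Fin.succ id := by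
  ext p i
  induction i using Fin.lastCases with
  | last =>
    have hup := congrFun hu p
    simp only [mulVec, dotProduct, hankel, of_apply] at hup
    simp only [mul_apply, oneSnocCol, hankel, of_apply, Fin.snoc_last, submatrix_apply, hup,
      Fin.val_succ, Fin.val_last, id]
    ring_nf
  | cast q =>
    simp [mul_apply, oneSnocCol, hankel, one_apply, add_right_comm]

lemma hankel_conj_oneSnocCol_mulVec_eq_zero
    (hu : hankel (fun j => c (j + 1)) k *ᵥ u = fun i : Fin k => c (k + 1 + i))
    {x : Fin (k + 1) → ℝ} (hx : hankel c (k + 1) *ᵥ x = 0) :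
    ((oneSnocCol u)ᴴ * hankel (fun j => c (j + 1)) k * oneSnocCol u) *ᵥ x = 0 := by
  rw [Matrix.mul_assoc, ← mulVec_mulVec, hankel_mul_oneSnocCol hu]
  have : (hankel c (k + 1)).submatrix Fin.succ id *ᵥ x = 0 := funext fun p => congrFun hx p.succ
  rw [this, mulVec_zero]

lemma hankel_conj_oneSnocCol_mulVec_single_castSucc
    (hu : hankel (fun j => c (j + 1)) k *ᵥ u = fun i : Fin k => c (k + 1 + i)) (i : Fin k) :
    ((oneSnocCol u)ᴴ * hankel (fun j => c (j + 1)) k * oneSnocCol u) *ᵥ Pi.single i.castSucc 1 =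
      hankel c (k + 1) *ᵥ Pi.single i.succ 1 := by
  ext j
  rw [mulVec_single_one, mulVec_single_one, col_apply, col_apply,
    ← (hankel_isHermitian _ _).eq, ← conjTranspose_mul, hankel_mul_oneSnocCol hu]
  simp [mul_apply, oneSnocCol, hankel, one_apply, add_comm]

theorem exists_measure_Ici_of_hankel_posSemidef (hH : (hankel c (k + 1)).PosSemidef)
    (hB : (hankel (fun j => c (j + 1)) k).PosSemidef)
    (hu : hankel (fun j => c (j + 1)) k *ᵥ u = fun i : Fin k => c (k + 1 + i)) :
    ∃ μ : Measure ℝ, IsFiniteMeasure μ ∧ μ (Set.Iio 0) = 0 ∧ HasMomentsUpTo μ c (2 * k) := by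
  obtain ⟨N, T, hT, hN, hNT⟩ := hH.exists_factor_intertwining
    (hB.conjTranspose_mul_mul_same (oneSnocCol u))
    fun _ => hankel_conj_oneSnocCol_mulVec_eq_zero hu
  set g : Fin (k + 1) → Fin (k + 1) → ℝ := fun i => N *ᵥ Pi.single i 1
  have hshift (i : Fin k) : T *ᵥ g i.castSucc = g i.succ :=
    hNT _ _ (hankel_conj_oneSnocCol_mulVec_single_castSucc hu i)
  have hgram (i j : Fin (k + 1)) : g i ⬝ᵥ g j = c (i + j) := by
    rw [mulVec_single_dotProduct_mulVec_single, hN]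
    rfl
  obtain ⟨μ, hμ, hsupp, hmom⟩ := hT.exists_measure_Ici_moments (g 0)
  refine ⟨μ, hμ, hsupp, fun j hj => ⟨(hmom j).1, ?_⟩⟩
  obtain ⟨a, b, ha, hb, rfl⟩ : ∃ a b, a < k + 1 ∧ b < k + 1 ∧ a + b = j :=
    ⟨min j k, j - min j k, by omega, by omega, by omega⟩
  rw [(hmom _).2, dotProduct_pow_add_mulVec (by simpa using hT.1.eq),
    pow_mulVec_eq_of_mulVec_castSucc hshift ⟨a, ha⟩,
    pow_mulVec_eq_of_mulVec_castSucc hshift ⟨b, hb⟩, hgram]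

end Sufficiency

section Necessity

variable {μ : Measure ℝ} {c : ℕ → ℝ} {m n : ℕ}

lemma pow_mul_sum_eq (d : ℕ) (x : Fin n → ℝ) (A : ℝ) :
    A ^ d * ∑ i, x i * A ^ (i : ℕ) = ∑ i, x i * A ^ (d + i) := by
  rw [Finset.mul_sum]
  exact Finset.sum_congr rfl fun i _ => by ring

lemma HasMomentsUpTo.integrable_pow_mul_sum (h : HasMomentsUpTo μ c m) {d : ℕ}
    (hd : d + n ≤ m + 1) (x : Fin n → ℝ) :
    Integrable (fun A => A ^ d * ∑ i, x i * A ^ (i : ℕ)) μ := by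
  simp_rw [pow_mul_sum_eq]
  exact integrable_finsetSum _ fun i _ => (h _ (by omega)).1.const_mul _

lemma HasMomentsUpTo.integral_pow_mul_sum (h : HasMomentsUpTo μ c m) {d : ℕ}
    (hd : d + n ≤ m + 1) (x : Fin n → ℝ) :
    ∫ A, A ^ d * ∑ i, x i * A ^ (i : ℕ) ∂μ = ∑ i, x i * c (d + i) := by
  simp_rw [pow_mul_sum_eq]
  rw [integral_finsetSum _ fun i _ => (h _ (by omega)).1.const_mul _]
  exact Finset.sum_congr rfl fun i _ => by rw [integral_const_mul, (h _ (by omega)).2]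

lemma pow_mul_sum_sq_eq (d : ℕ) (x : Fin n → ℝ) (A : ℝ) :
    A ^ d * (∑ i, x i * A ^ (i : ℕ)) ^ 2 =
      ∑ i, x i * (A ^ (d + i) * ∑ j, x j * A ^ (j : ℕ)) := by
  rw [sq, ← mul_assoc, pow_mul_sum_eq, Finset.sum_mul]
  exact Finset.sum_congr rfl fun i _ => by ring

lemma HasMomentsUpTo.integrable_pow_mul_sum_sq (h : HasMomentsUpTo μ c m) {d : ℕ}
    (hd : d + 2 * n ≤ m + 2) (x : Fin n → ℝ) :
    Integrable (fun A => A ^ d * (∑ i, x i * A ^ (i : ℕ)) ^ 2) μ := by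
  simp_rw [pow_mul_sum_sq_eq]
  exact integrable_finsetSum _ fun i _ =>
    (h.integrable_pow_mul_sum (by omega) x).const_mul _

lemma HasMomentsUpTo.integral_pow_mul_sum_sq (h : HasMomentsUpTo μ c m) {d : ℕ}
    (hd : d + 2 * n ≤ m + 2) (x : Fin n → ℝ) :
    ∫ A, A ^ d * (∑ i, x i * A ^ (i : ℕ)) ^ 2 ∂μ =
      x ⬝ᵥ (hankel (fun j => c (j + d)) n *ᵥ x) := by
  simp_rw [pow_mul_sum_sq_eq]
  rw [integral_finsetSum _ fun i _ => (h.integrable_pow_mul_sum (by omega) x).const_mul _]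
  refine Finset.sum_congr rfl fun i _ => ?_
  rw [integral_const_mul, h.integral_pow_mul_sum (by omega), mulVec, dotProduct]
  congr 1
  exact Finset.sum_congr rfl fun j _ => by simp only [hankel, of_apply]; ring_nf

lemma HasMomentsUpTo.hankel_posSemidef (h : HasMomentsUpTo μ c m) {d : ℕ}
    (hd : d + 2 * n ≤ m + 2) (hpos : ∀ᵐ A ∂μ, 0 ≤ A ^ d) :
    (hankel (fun j => c (j + d)) n).PosSemidef := by
  refine .of_dotProduct_mulVec_nonneg (hankel_isHermitian _ _) fun x => ?_
  rw [star_trivial, ← h.integral_pow_mul_sum_sq hd]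
  exact integral_nonneg_of_ae (by filter_upwards [hpos] with A hA using by positivity)

lemma HasMomentsUpTo.exists_hankel_mulVec_eq {k : ℕ} (h : HasMomentsUpTo μ c (2 * k))
    (hpos : ∀ᵐ A ∂μ, 0 ≤ A) :
    ∃ u, hankel (fun j => c (j + 1)) k *ᵥ u = fun i : Fin k => c (k + 1 + i) := by
  refine (hankel_isHermitian _ _).exists_mulVec_eq fun w hw => ?_
  have hsq : (fun A => A ^ 1 * (∑ i, w i * A ^ (i : ℕ)) ^ 2) =ᵐ[μ] 0 := by
    rw [← integral_eq_zero_iff_of_nonneg_ae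
      (by filter_upwards [hpos] with A hA using by positivity)
      (h.integrable_pow_mul_sum_sq (by omega) w),
      h.integral_pow_mul_sum_sq (by omega), hw, dotProduct_zero]
  have hlin : (fun A => A ^ (k + 1) * ∑ i, w i * A ^ (i : ℕ)) =ᵐ[μ] 0 := by
    filter_upwards [hsq] with A hA
    rcases mul_eq_zero.mp hA with hA | hA <;> simp_all
  rw [dotProduct_comm, dotProduct, ← h.integral_pow_mul_sum (by omega), integral_congr_ae hlin]
  simp

lemma HasMomentsUpTo.hankel_conditions {k : ℕ} (h : HasMomentsUpTo μ c (2 * k))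
    (hsupp : μ (Set.Iio 0) = 0) :
    (hankel c (k + 1)).PosSemidef ∧ (hankel (fun j => c (j + 1)) k).PosSemidef ∧
      ∃ u, hankel (fun j => c (j + 1)) k *ᵥ u = fun i : Fin k => c (k + 1 + i) := by
  have hpos : ∀ᵐ A ∂μ, 0 ≤ A := ae_iff.mpr (by simpa [not_le, Set.Iio] using hsupp)
  refine ⟨by simpa using h.hankel_posSemidef (d := 0) (by omega) (by simp),
    h.hankel_posSemidef (by omega) (by simpa using hpos), h.exists_hankel_mulVec_eq hpos⟩

end Necessity

/-- Truncated Stieltjes moment problem, even case (Curto–Fialkow):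
(c_0,…,c_{2k}) is a Stieltjes moment sequence iff the Hankel matrix
H_k is PSD, the k×k shifted Hankel matrix B_{k-1} is PSD, and
(c_{k+1},…,c_{2k}) lies in the range of B_{k-1}. -/
theorem stmt_6 (k : ℕ) (c : ℕ → ℝ) :
    ((Matrix.of fun i j : Fin (k + 1) => c ((i : ℕ) + (j : ℕ))).PosSemidef ∧
     (Matrix.of fun i j : Fin k => c ((i : ℕ) + (j : ℕ) + 1)).PosSemidef ∧
     (∃ u : Fin k → ℝ,
        (Matrix.of fun i j : Fin k => c ((i : ℕ) + (j : ℕ) + 1)).mulVec u =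
          fun i : Fin k => c (k + 1 + (i : ℕ))))
    ↔
    (∃ μ : Measure ℝ, IsFiniteMeasure μ ∧ μ (Set.Iio 0) = 0 ∧
       ∀ j ≤ 2 * k,
         Integrable (fun A : ℝ => A ^ j) μ ∧ (∫ A, A ^ j ∂μ) = c j) := by
  constructor
  · rintro ⟨hH, hB, u, hu⟩
    exact exists_measure_Ici_of_hankel_posSemidef hH hB hu
  · rintro ⟨μ, -, hsupp, hmom⟩
    exact HasMomentsUpTo.hankel_conditions hmom hsupp
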